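/- Let f ∈ ℂ[x,y,z] be homogeneous of degree d not divisible by z, and let g(x,y) = f(x,y,1). If (a,b,c) ∈ AR(f), i.e., a·f_x + b·f_y + c·f_z = 0, then the triple (θ(a) − x·θ(c), θ(b) − y·θ(c), d·θ(c)) lies in AR(g), where θ(u) = u(x,y,1). -/

import Mathlib

/-!
Dehomogenization `θ` is a ring map sending `z` to `1` and commuting with `∂/∂x` and `∂/∂y`.
Applied to the Euler formula it gives `θ(f_z) = d·g − x·g_x − y·g_y`, and substituting this
into `θ(a·f_x + b·f_y + c·f_z) = 0` is exactly the claimed relation for `g`.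
-/

open MvPolynomial

noncomputable section

/-- Dehomogenization `θ : ℂ[x,y,z] → ℂ[x,y]`, `u ↦ u(x,y,1)`. -/
def theta (u : MvPolynomial (Fin 3) ℂ) : MvPolynomial (Fin 2) ℂ :=
  aeval ![X 0, X 1, 1] u

namespace MvPolynomial

lemma aeval_snoc_C_pderiv_castSucc {R : Type*} [CommRing R] {n : ℕ}
    (p : MvPolynomial (Fin (n + 1)) R) (r : R) (j : Fin n) :
    aeval (Fin.snoc X (C r)) (pderiv j.castSucc p) =
      pderiv j (aeval (Fin.snoc X (C r) : Fin (n + 1) → MvPolynomial (Fin n) R) p) := by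
  classical
  induction p using MvPolynomial.induction_on with
  | C a => simp
  | add p q hp hq => simp only [map_add, hp, hq]
  | mul_X p i h =>
    simp only [Derivation.leibniz, pderiv_X, smul_eq_mul, map_add, map_mul, aeval_X, h]
    cases i using Fin.lastCases <;> simp [Pi.single_apply]

end MvPolynomial

lemma theta_eq_aeval_snoc :
    theta = aeval (Fin.snoc X (C 1) : Fin 3 → MvPolynomial (Fin 2) ℂ) := by
  ext u
  simp only [theta]
  congr
  funext i
  fin_cases i <;> rfl

lemma theta_pderiv_castSucc (i : Fin 2) (u : MvPolynomial (Fin 3) ℂ) :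
    theta (pderiv i.castSucc u) = pderiv i (theta u) := by
  simpa [theta_eq_aeval_snoc] using aeval_snoc_C_pderiv_castSucc u 1 i

theorem phi_maps_into_ARg (f : MvPolynomial (Fin 3) ℂ) (d : ℕ)
    (hf : f.IsHomogeneous d)
    (a b c : MvPolynomial (Fin 3) ℂ)
    (habc : a * pderiv (0 : Fin 3) f + b * pderiv (1 : Fin 3) f + c * pderiv (2 : Fin 3) f = 0) :
    (theta a - X 0 * theta c) * pderiv (0 : Fin 2) (theta f) +
      (theta b - X 1 * theta c) * pderiv (1 : Fin 2) (theta f) +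
      ((d : MvPolynomial (Fin 2) ℂ) * theta c) * theta f = 0 := by
  have euler : X 0 * theta (pderiv 0 f) + X 1 * theta (pderiv 1 f) + theta (pderiv 2 f) =
      (d : MvPolynomial (Fin 2) ℂ) * theta f := by
    simpa only [theta, Fin.sum_univ_three, map_add, map_mul, aeval_X, Matrix.cons_val, one_mul,
      nsmul_eq_mul, map_natCast] using congrArg theta hf.sum_X_mul_pderiv
  have syzygy : theta a * theta (pderiv 0 f) + theta b * theta (pderiv 1 f) +
      theta c * theta (pderiv 2 f) = 0 := by
    simpa only [theta, map_add, map_mul, map_zero] using congrArg theta habc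
  rw [← theta_pderiv_castSucc 0, ← theta_pderiv_castSucc 1, Fin.castSucc_zero, Fin.castSucc_one]
  linear_combination syzygy - theta c * euler

end
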